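/- For every c ∈ (0,1) there exist a constant C > 0 and N ∈ ℕ such that for every integer n ≥ N and every real β with n^c ≤ β ≤ n^{2−c} and β ≤ n^{2/3}: the matrix Σ̃_t is positive definite for every t ∈ T', and ∫_{T'} ∫_0^∞ y·(det Σ̃_t)^{−1/2}·φ₂(Σ̃_t^{−1/2}·((0, y) − μ̃_t)) dy dt ≤ C·√β. -/

import Mathlib

open MeasureTheory ProbabilityTheory Real Set Filter Matrix
open scoped ENNReal BigOperators

/-!
Write `Σ̃_t = a • [[2, -t], [-t, 3β]]` with `a = 2^(-5/2) β^(-3/2) e^(-t²/2)` and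
`μ̃_t = M • (t, 1 - t²)`. On `T'` we have `t² ≤ 2 log n ≤ β`, and there the quadratic form of
`Σ̃_t⁻¹ = S_t²` dominates `w₀²/(6a) + w₁²/(6βa)`. Hence the `y`-integral is bounded by the first
moment of a one-dimensional Gaussian, which gives `e^(-Lt²/3) (3√β + 3√L (1 + t²))` with
`L = n β^(-3/2) e^(-t²/2)`; the definition of `T'` is exactly what makes `1 ≤ L ≤ L₀ := n β^(-3/2)`.
The first term integrates to `O(√β)`. The second is at most `54 / (|t| + L₀^(-1/2))`, whose
integral over `T'` is `O(log n)`, and `log n = o(n^(c/2)) = o(√β)`.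
-/

/-- The approximating mean vector
`μ̃_t = √n·β^(−3/2)·e^(−t²/2)·(t, 1 − t²) ∈ ℝ²`. -/
noncomputable def muTilde (n : ℕ) (β t : ℝ) : Fin 2 → ℝ :=
  (Real.sqrt n * β ^ (-(3 : ℝ) / 2) * Real.exp (-t ^ 2 / 2)) • ![t, 1 - t ^ 2]

/-- The approximating covariance matrix
`Σ̃_t = 2^(−5/2)·β^(−3/2)·e^(−t²/2)·[[2, −t], [−t, 3β]]`. -/
noncomputable def sigmaTilde (β t : ℝ) : Matrix (Fin 2) (Fin 2) ℝ :=
  ((2 : ℝ) ^ (-(5 : ℝ) / 2) * β ^ (-(3 : ℝ) / 2) * Real.exp (-t ^ 2 / 2)) •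
    !![2, -t; -t, 3 * β]

/-- The standard bivariate Gaussian density `φ₂(v) = (2π)^(−1)·exp(−‖v‖²/2)`. -/
noncomputable def phi2 (v : Fin 2 → ℝ) : ℝ :=
  (2 * Real.pi)⁻¹ * Real.exp (-((v 0) ^ 2 + (v 1) ^ 2) / 2)

lemma sqrt_le_exp_half (x : ℝ) : √x ≤ exp (x / 2) := by
  rw [exp_half]
  exact sqrt_le_sqrt (by linarith [add_one_le_exp x])

lemma abs_mul_exp_neg_sq_div_le (z : ℝ) {c : ℝ} (hc : 0 < c) :
    |z| * exp (-z ^ 2 / c) ≤ √c * exp (-z ^ 2 / (2 * c)) := by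
  have habs : |z| = √c * √(z ^ 2 / c) := by
    rw [← sqrt_mul hc.le, mul_div_cancel₀ _ hc.ne', sqrt_sq_eq_abs]
  calc |z| * exp (-z ^ 2 / c)
      ≤ √c * exp (z ^ 2 / c / 2) * exp (-z ^ 2 / c) := by
        rw [habs]; gcongr; exact sqrt_le_exp_half _
    _ = √c * exp (-z ^ 2 / (2 * c)) := by
        rw [mul_assoc, ← exp_add]; congr 2; field_simp; ring

lemma integral_exp_neg_sub_sq_div (m c : ℝ) :
    ∫ y, exp (-(y - m) ^ 2 / c) = √(π * c) := by
  have := integral_sub_right_eq_self (μ := volume) (fun y : ℝ => exp (-c⁻¹ * y ^ 2)) m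
  convert this.trans (integral_gaussian c⁻¹) using 2
  · ext y; congr 1; ring
  · rw [div_inv_eq_mul]

lemma integrable_exp_neg_sub_sq_div (m : ℝ) {c : ℝ} (hc : 0 < c) :
    Integrable fun y => exp (-(y - m) ^ 2 / c) := by
  have := (integrable_exp_neg_mul_sq (inv_pos.mpr hc)).comp_sub_right m
  convert this using 2 with y
  ring_nf

lemma setIntegral_Ioi_le_of_le_mul_exp {f : ℝ → ℝ} {K m c : ℝ} (hK : 0 ≤ K) (hc : 0 < c)
    (hf0 : ∀ y ∈ Ioi (0 : ℝ), 0 ≤ f y)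
    (hf : ∀ y ∈ Ioi (0 : ℝ), f y ≤ K * (y * exp (-(y - m) ^ 2 / c))) :
    ∫ y in Ioi 0, f y ≤ K * ((√c + |m|) * √(π * (2 * c))) := by
  have hdom : ∀ y ∈ Ioi (0 : ℝ),
      f y ≤ K * (√c + |m|) * exp (-(y - m) ^ 2 / (2 * c)) := by
    intro y hy
    have hym : y ≤ |y - m| + |m| := by linarith [le_abs_self (y - m), le_abs_self m]
    have hexp : exp (-(y - m) ^ 2 / c) ≤ exp (-(y - m) ^ 2 / (2 * c)) := by
      rw [exp_le_exp, neg_div, neg_div, neg_le_neg_iff]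
      exact div_le_div_of_nonneg_left (sq_nonneg _) hc (by linarith)
    calc f y ≤ K * ((|y - m| + |m|) * exp (-(y - m) ^ 2 / c)) := by
          refine (hf y hy).trans ?_; gcongr
      _ ≤ K * (√c * exp (-(y - m) ^ 2 / (2 * c)) + |m| * exp (-(y - m) ^ 2 / (2 * c))) := by
          rw [add_mul]
          gcongr K * (?_ + ?_)
          · exact abs_mul_exp_neg_sq_div_le _ hc
          · exact mul_le_mul_of_nonneg_left hexp (abs_nonneg m)
      _ = K * (√c + |m|) * exp (-(y - m) ^ 2 / (2 * c)) := by ring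
  have hint := (integrable_exp_neg_sub_sq_div m (by positivity : 0 < 2 * c)).const_mul
    (K * (√c + |m|))
  calc ∫ y in Ioi 0, f y
      ≤ ∫ y in Ioi 0, K * (√c + |m|) * exp (-(y - m) ^ 2 / (2 * c)) :=
        setIntegral_mono_of_nonneg hf0 hdom hint.integrableOn
    _ ≤ ∫ y, K * (√c + |m|) * exp (-(y - m) ^ 2 / (2 * c)) :=
        setIntegral_le_integral hint (ae_of_all _ fun y => by positivity)
    _ = K * ((√c + |m|) * √(π * (2 * c))) := by
        rw [integral_const_mul, integral_exp_neg_sub_sq_div]; ring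

lemma posDef_smul_of_fin_two {a p r s : ℝ} (ha : 0 < a) (hp : 0 < p) (hdet : r ^ 2 < p * s) :
    (a • !![p, r; r, s]).PosDef := by
  rw [posDef_iff_dotProduct_mulVec]
  refine ⟨?_, fun x hx => ?_⟩
  · ext i j
    fin_cases i <;> fin_cases j <;> simp
  · have hx' : x 0 ≠ 0 ∨ x 1 ≠ 0 := by
      by_contra! h
      exact hx (funext fun i => by fin_cases i <;> simp [h.1, h.2])
    have hquad : star x ⬝ᵥ ((a • !![p, r; r, s]) *ᵥ x)
        = a * (p * x 0 ^ 2 + 2 * r * x 0 * x 1 + s * x 1 ^ 2) := by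
      simp [mulVec, dotProduct, Fin.sum_univ_two]
      ring
    rw [hquad]
    refine mul_pos ha (pos_of_mul_pos_right ?_ hp.le)
    have hsq : p * (p * x 0 ^ 2 + 2 * r * x 0 * x 1 + s * x 1 ^ 2)
        = (p * x 0 + r * x 1) ^ 2 + (p * s - r ^ 2) * x 1 ^ 2 := by ring
    rw [hsq]
    rcases eq_or_ne (x 1) 0 with h1 | h1
    · have h0 : x 0 ≠ 0 := hx'.resolve_right (not_not.mpr h1)
      rw [h1]
      have := mul_pos (mul_pos hp hp) (sq_pos_of_ne_zero h0)
      nlinarith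
    · exact add_pos_of_nonneg_of_pos (sq_nonneg _)
        (mul_pos (sub_pos.mpr hdet) (sq_pos_of_ne_zero h1))

lemma det_smul_of_fin_two (a p r s : ℝ) : (a • !![p, r; r, s]).det = a ^ 2 * (p * s - r ^ 2) := by
  simp [det_fin_two]; ring

lemma inv_smul_of_fin_two (a p r s : ℝ) :
    (a • !![p, r; r, s])⁻¹ = (a * (p * s - r ^ 2))⁻¹ • !![s, -r; -r, p] := by
  rw [inv_def, adjugate_fin_two, det_fin_two, Ring.inverse_eq_inv']
  by_cases ha : a = 0
  · subst ha; simp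
  ext i j
  fin_cases i <;> fin_cases j <;> simp <;> field_simp

lemma dotProduct_inv_smul_of_fin_two_mulVec (a p r s : ℝ) (w : Fin 2 → ℝ) :
    w ⬝ᵥ ((a • !![p, r; r, s])⁻¹ *ᵥ w)
      = (s * w 0 ^ 2 - 2 * r * w 0 * w 1 + p * w 1 ^ 2) / (a * (p * s - r ^ 2)) := by
  rw [inv_smul_of_fin_two, div_eq_mul_inv]
  simp only [mulVec, dotProduct, Fin.sum_univ_two, smul_of, of_apply, smul_cons, Matrix.smul_empty,
    cons_val_zero, cons_val_one, smul_eq_mul]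
  ring

lemma dotProduct_mulVec_self_of_mul_mul_eq_one {ι R : Type*} [Fintype ι] [DecidableEq ι]
    [CommRing R] {S A : Matrix ι ι R} (hS : Sᵀ = S) (h : S * S * A = 1) (w : ι → R) :
    (S *ᵥ w) ⬝ᵥ (S *ᵥ w) = w ⬝ᵥ (A⁻¹ *ᵥ w) := by
  rw [inv_eq_left_inv h, ← mulVec_mulVec, dotProduct_mulVec w S, ← mulVec_transpose, hS]

lemma phi2_nonneg (v : Fin 2 → ℝ) : 0 ≤ phi2 v := by
  unfold phi2; positivity

lemma phi2_mulVec_le {a β t : ℝ} (ha : 0 < a) (hβ : 0 < β) (ht : t ^ 2 ≤ 2 * β)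
    {S : Matrix (Fin 2) (Fin 2) ℝ} (hS : S.IsHermitian)
    (hSS : S * S * (a • !![2, -t; -t, 3 * β]) = 1) (w : Fin 2 → ℝ) :
    phi2 (S *ᵥ w) ≤ (2 * π)⁻¹ * (exp (-w 0 ^ 2 / (12 * a)) * exp (-w 1 ^ 2 / (12 * β * a))) := by
  have hd : 0 < 6 * β - t ^ 2 := by linarith
  have hnorm := dotProduct_mulVec_self_of_mul_mul_eq_one
    ((conjTranspose_eq_transpose_of_trivial S).symm.trans hS) hSS w
  rw [dotProduct_inv_smul_of_fin_two_mulVec] at hnorm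
  simp only [dotProduct, Fin.sum_univ_two, ← sq, neg_sq, mul_neg, neg_mul, sub_neg_eq_add,
    show (2 : ℝ) * (3 * β) = 6 * β by ring] at hnorm
  have hlow : w 0 ^ 2 / (6 * a) + w 1 ^ 2 / (6 * β * a)
      ≤ (3 * β * w 0 ^ 2 + 2 * t * w 0 * w 1 + 2 * w 1 ^ 2) / (a * (6 * β - t ^ 2)) := by
    rw [div_add_div _ _ (by positivity) (by positivity),
      div_le_div_iff₀ (by positivity) (by positivity)]
    -- cleared of denominators, the right side minus the left side is `6 a²` times `hgap`'s term
    have hgap : 0 ≤ 6 * β * ((w 1 + t * w 0) ^ 2 + (2 * β - t ^ 2) * w 0 ^ 2)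
        + β * (t * w 0) ^ 2 + (t * w 1) ^ 2 := by
      have := mul_nonneg (sub_nonneg.mpr ht) (sq_nonneg (w 0))
      positivity
    nlinarith [mul_nonneg (sq_nonneg a) hgap]
  have hhalf : -w 0 ^ 2 / (12 * a) + -w 1 ^ 2 / (12 * β * a)
      = -(w 0 ^ 2 / (6 * a) + w 1 ^ 2 / (6 * β * a)) / 2 := by ring
  unfold phi2
  rw [← exp_add, hhalf]
  gcongr _ * exp ?_
  linarith

lemma det_rpow_neg_half_le {a β t : ℝ} (ha : 0 < a) (hβ : 0 < β) (ht : t ^ 2 ≤ 2 * β) :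
    (a • !![2, -t; -t, 3 * β]).det ^ (-(1 : ℝ) / 2) ≤ (2 * a * √β)⁻¹ := by
  rw [det_smul_of_fin_two, show -(1 : ℝ) / 2 = -(1 / 2) by norm_num,
    rpow_neg (by nlinarith), ← sqrt_eq_rpow]
  apply inv_anti₀ (by positivity)
  rw [show 2 * a * √β = √((2 * a) ^ 2 * β) by
    rw [sqrt_mul (sq_nonneg _), sqrt_sq (by positivity)]]
  exact sqrt_le_sqrt (by nlinarith)

lemma kacRice_integrand_le {a β t M y : ℝ} (ha : 0 < a) (hβ : 0 < β) (ht : t ^ 2 ≤ 2 * β)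
    (hy : 0 < y) {S : Matrix (Fin 2) (Fin 2) ℝ} (hS : S.IsHermitian)
    (hSS : S * S * (a • !![2, -t; -t, 3 * β]) = 1) :
    y * (a • !![2, -t; -t, 3 * β]).det ^ (-(1 : ℝ) / 2) *
        phi2 (S *ᵥ (![0, y] - M • ![t, 1 - t ^ 2]))
      ≤ (4 * π * a * √β)⁻¹ * exp (-(M * t) ^ 2 / (12 * a)) *
          (y * exp (-(y - M * (1 - t ^ 2)) ^ 2 / (12 * β * a))) := by
  have hphi := phi2_mulVec_le ha hβ ht hS hSS (![0, y] - M • ![t, 1 - t ^ 2])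
  simp only [Pi.sub_apply, Pi.smul_apply, smul_eq_mul, cons_val_zero, cons_val_one, zero_sub,
    neg_sq] at hphi
  calc _ ≤ y * (2 * a * √β)⁻¹ * ((2 * π)⁻¹ * (exp (-(M * t) ^ 2 / (12 * a)) *
            exp (-(y - M * (1 - t ^ 2)) ^ 2 / (12 * β * a)))) := by
        refine mul_le_mul (mul_le_mul_of_nonneg_left ?_ hy.le) hphi (phi2_nonneg _) (by positivity)
        exact det_rpow_neg_half_le ha hβ ht
    _ = _ := by rw [mul_inv, mul_inv, mul_inv, mul_inv, mul_inv]; ring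

lemma integral_Ioi_kacRice_le {a β t M : ℝ} (ha : 0 < a) (hβ : 0 < β) (ht : t ^ 2 ≤ 2 * β)
    (hM : 0 ≤ M) {S : Matrix (Fin 2) (Fin 2) ℝ} (hS : S.IsHermitian)
    (hSS : S * S * (a • !![2, -t; -t, 3 * β]) = 1) :
    ∫ y in Ioi 0, y * (a • !![2, -t; -t, 3 * β]).det ^ (-(1 : ℝ) / 2) *
        phi2 (S *ᵥ (![0, y] - M • ![t, 1 - t ^ 2]))
      ≤ exp (-(M * t) ^ 2 / (12 * a)) * (3 * √β + M * (1 + t ^ 2) / √a) := by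
  set E := exp (-(M * t) ^ 2 / (12 * a))
  set m := M * (1 - t ^ 2)
  have hdet : 0 ≤ (a • !![2, -t; -t, 3 * β]).det := by rw [det_smul_of_fin_two]; nlinarith
  have hint := setIntegral_Ioi_le_of_le_mul_exp (by positivity) (by positivity)
    (fun y (hy : 0 < y) => mul_nonneg (mul_nonneg hy.le (rpow_nonneg hdet _)) (phi2_nonneg _))
    (fun y hy => kacRice_integrand_le (M := M) ha hβ ht hy hS hSS)
  have hsa : 0 < √a := sqrt_pos.mpr ha
  have hsβ : 0 < √β := sqrt_pos.mpr hβ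
  have hsπ : 0 < √π := sqrt_pos.mpr pi_pos
  calc _ ≤ (4 * π * a * √β)⁻¹ * E * ((√(12 * β * a) + |m|) * √(π * (2 * (12 * β * a)))) := hint
    _ = E * (3 * √β * (√2 / √π) + |m| * (√2 * √12 / (4 * √π)) / √a) := by
        rw [show π * (2 * (12 * β * a)) = π * 2 * 12 * β * a by ring]
        simp only [sqrt_mul, sqrt_mul', mul_nonneg, pi_pos.le, hβ.le, ha.le, zero_le_two]
        set sπ := √π
        set sa := √a
        set sβ := √β
        set s12 := √12
        rw [show π = sπ ^ 2 from (sq_sqrt pi_pos.le).symm,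
          show a = sa ^ 2 from (sq_sqrt ha.le).symm]
        have hs12 : s12 ^ 2 = 12 := sq_sqrt (by norm_num)
        field_simp
        linear_combination (E * sa * sβ) * hs12
    _ ≤ E * (3 * √β + M * (1 + t ^ 2) / √a) := by
        have hsπ2 : √2 ≤ √π := sqrt_le_sqrt (by linarith [pi_gt_three])
        have h12 : √12 ≤ 4 := sqrt_le_iff.mpr ⟨by norm_num, by norm_num⟩
        have hm : |m| ≤ M * (1 + t ^ 2) := by
          rw [abs_mul, abs_of_nonneg hM]
          gcongr
          exact abs_le.mpr ⟨by nlinarith, by nlinarith⟩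
        gcongr E * (?_ + ?_ / _)
        · exact mul_le_of_le_one_right (by positivity) ((div_le_one hsπ).mpr hsπ2)
        · refine (mul_le_of_le_one_right (abs_nonneg _) ?_).trans hm
          exact (div_le_one (by positivity)).mpr (by nlinarith [sqrt_nonneg 2])

lemma sigmaTilde_posDef {β t : ℝ} (hβ : 0 < β) (ht : t ^ 2 < 6 * β) : (sigmaTilde β t).PosDef :=
  posDef_smul_of_fin_two (by positivity) two_pos (by linarith)

lemma two_rpow_neg_five_halves_mem_Icc : (2 : ℝ) ^ (-(5 : ℝ) / 2) ∈ Icc (1 / 9) (1 / 4) := by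
  have h : (2 : ℝ) ^ (-(5 : ℝ) / 2) = (4 * √2)⁻¹ := by
    rw [show -(5 : ℝ) / 2 = -(2 + 1 / 2) by norm_num, rpow_neg (by norm_num),
      rpow_add (by norm_num), ← sqrt_eq_rpow]
    norm_num
  have h2 : √2 ≤ 2 := sqrt_le_iff.mpr ⟨by norm_num, by norm_num⟩
  have h1 : 1 ≤ √2 := one_le_sqrt.mpr (by norm_num)
  rw [h, mem_Icc]
  constructor
  · rw [one_div]; exact inv_anti₀ (by positivity) (by linarith)
  · rw [one_div]; exact inv_anti₀ (by positivity) (by linarith)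

lemma integral_Ioi_sigmaTilde_le (n : ℕ) {β t : ℝ} (hβ : 0 < β) (ht : t ^ 2 ≤ 2 * β)
    {S : Matrix (Fin 2) (Fin 2) ℝ} (hS : S.IsHermitian) (hSS : S * S * sigmaTilde β t = 1) :
    ∫ y in Ioi 0, y * (sigmaTilde β t).det ^ (-(1 : ℝ) / 2) *
        phi2 (S *ᵥ (![0, y] - muTilde n β t))
      ≤ exp (-(n * β ^ (-(3 : ℝ) / 2) * exp (-t ^ 2 / 2)) * t ^ 2 / 3) *
          (3 * √β + 3 * √(n * β ^ (-(3 : ℝ) / 2) * exp (-t ^ 2 / 2)) * (1 + t ^ 2)) := by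
  set κ := (2 : ℝ) ^ (-(5 : ℝ) / 2)
  set u := β ^ (-(3 : ℝ) / 2)
  set E := exp (-t ^ 2 / 2)
  set L := n * u * E
  obtain ⟨hκ9, hκ4⟩ : κ ∈ Icc (1 / 9) (1 / 4) := two_rpow_neg_five_halves_mem_Icc
  have hκ : 0 < κ := by linarith
  have hu : 0 < u := rpow_pos_of_pos hβ _
  have hE : 0 < E := exp_pos _
  have hL : 0 ≤ L := by positivity
  have ha : 0 < κ * u * E := by positivity
  have hM_sq : (√n * u * E) ^ 2 = L / κ * (κ * u * E) := by
    rw [mul_pow, mul_pow, sq_sqrt (Nat.cast_nonneg n)]; field_simp; ring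
  refine (integral_Ioi_kacRice_le (a := κ * u * E) (M := √n * u * E) ha hβ ht (by positivity)
    hS hSS).trans ?_
  gcongr exp ?_ * (_ + ?_)
  · have h : L / κ * (κ * u * E) * t ^ 2 / (12 * (κ * u * E)) = L * t ^ 2 / (12 * κ) := by
      field_simp
    rw [mul_pow, hM_sq]
    simp only [neg_mul, neg_div, neg_le_neg_iff]
    rw [h]
    exact div_le_div_of_nonneg_left (by positivity) (by positivity) (by linarith)
  · have hM : √n * u * E / √(κ * u * E) = √(L / κ) := by
      rw [← sqrt_sq (by positivity : 0 ≤ √n * u * E), ← sqrt_div' _ ha.le, hM_sq,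
        mul_div_cancel_right₀ _ ha.ne']
    have h9 : L / κ ≤ 3 ^ 2 * L := by
      rw [div_le_iff₀ hκ]; nlinarith
    calc √n * u * E * (1 + t ^ 2) / √(κ * u * E) = √(L / κ) * (1 + t ^ 2) := by
          rw [← hM]; ring
      _ ≤ 3 * √L * (1 + t ^ 2) := by
          gcongr
          calc √(L / κ) ≤ √(3 ^ 2 * L) := sqrt_le_sqrt h9
            _ = 3 * √L := by rw [sqrt_mul (by norm_num), sqrt_sq (by norm_num)]

lemma sqrt_mul_one_add_sq_mul_exp_le {L L₀ : ℝ} (hL : 1 ≤ L) (hL₀ : L ≤ L₀) (t : ℝ) :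
    √L * (1 + t ^ 2) * exp (-L * t ^ 2 / 3) ≤ 18 / (|t| + (√L₀)⁻¹) := by
  set x := L * t ^ 2
  have hx : 0 ≤ x := by positivity
  have hδ : 0 < (√L₀)⁻¹ := inv_pos.mpr (sqrt_pos.mpr (by linarith))
  have hcancel : exp (x / 6) * exp (-x / 6) = 1 := by rw [← exp_add]; ring_nf; exact exp_zero
  have hsqrt_x : √x ≤ 2 * exp (x / 6) := by
    calc √x = √3 * √(x / 3) := by rw [← sqrt_mul (by norm_num)]; ring_nf
      _ ≤ 2 * exp (x / 3 / 2) := by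
          gcongr
          · exact sqrt_le_iff.mpr ⟨by norm_num, by norm_num⟩
          · exact sqrt_le_exp_half _
      _ = 2 * exp (x / 6) := by ring_nf
  have hA : √L * (|t| + (√L₀)⁻¹) * exp (-x / 6) ≤ 3 := by
    have hLt : √L * |t| = √x := by rw [sqrt_mul (by linarith), sqrt_sq_eq_abs]
    have hLL₀ : √L * (√L₀)⁻¹ ≤ 1 := by
      rw [← div_eq_mul_inv, div_le_one (inv_pos.mp hδ)]; exact sqrt_le_sqrt hL₀
    have hexp : exp (-x / 6) ≤ 1 := exp_le_one_iff.mpr (by linarith)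
    calc √L * (|t| + (√L₀)⁻¹) * exp (-x / 6)
        = √x * exp (-x / 6) + √L * (√L₀)⁻¹ * exp (-x / 6) := by rw [← hLt]; ring
      _ ≤ 2 * exp (x / 6) * exp (-x / 6) + 1 * 1 := by gcongr
      _ = 3 := by rw [mul_assoc, hcancel]; norm_num
  have hB : (1 + t ^ 2) * exp (-x / 6) ≤ 6 := by
    have : 1 + t ^ 2 ≤ 6 * exp (x / 6) := by
      nlinarith [add_one_le_exp (x / 6), mul_le_mul_of_nonneg_right hL (sq_nonneg t)]
    calc (1 + t ^ 2) * exp (-x / 6) ≤ 6 * exp (x / 6) * exp (-x / 6) := by gcongr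
      _ = 6 := by rw [mul_assoc, hcancel, mul_one]
  rw [le_div_iff₀ (by positivity)]
  calc √L * (1 + t ^ 2) * exp (-L * t ^ 2 / 3) * (|t| + (√L₀)⁻¹)
      = (√L * (|t| + (√L₀)⁻¹) * exp (-x / 6)) * ((1 + t ^ 2) * exp (-x / 6)) := by
        rw [show -L * t ^ 2 / 3 = -x / 6 + -x / 6 by ring, exp_add]; ring
    _ ≤ 3 * 6 := by gcongr
    _ = 18 := by norm_num

noncomputable def kacRiceMajorant (β δ t : ℝ) : ℝ :=
  3 * √β * exp (-t ^ 2 / 3) + 54 / (|t| + δ)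

lemma exp_mul_le_kacRiceMajorant {L L₀ : ℝ} (hL : 1 ≤ L) (hL₀ : L ≤ L₀) (β t : ℝ) :
    exp (-L * t ^ 2 / 3) * (3 * √β + 3 * √L * (1 + t ^ 2)) ≤ kacRiceMajorant β (√L₀)⁻¹ t := by
  have hexp : exp (-L * t ^ 2 / 3) ≤ exp (-t ^ 2 / 3) := by
    gcongr
    nlinarith [mul_le_mul_of_nonneg_right hL (sq_nonneg t)]
  have := sqrt_mul_one_add_sq_mul_exp_le hL hL₀ t
  calc exp (-L * t ^ 2 / 3) * (3 * √β + 3 * √L * (1 + t ^ 2))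
      = 3 * √β * exp (-L * t ^ 2 / 3) + 3 * (√L * (1 + t ^ 2) * exp (-L * t ^ 2 / 3)) := by ring
    _ ≤ 3 * √β * exp (-t ^ 2 / 3) + 3 * (18 / (|t| + (√L₀)⁻¹)) := by gcongr
    _ = kacRiceMajorant β (√L₀)⁻¹ t := by rw [kacRiceMajorant]; ring

lemma continuous_kacRiceMajorant (β : ℝ) {δ : ℝ} (hδ : 0 < δ) :
    Continuous (kacRiceMajorant β δ) := by
  unfold kacRiceMajorant
  exact (by fun_prop : Continuous fun t : ℝ => 3 * √β * exp (-t ^ 2 / 3)).add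
    (continuous_const.div (continuous_abs.add continuous_const)
      fun t => (add_pos_of_nonneg_of_pos (abs_nonneg t) hδ).ne')

lemma integral_Icc_inv_abs_add {R δ : ℝ} (hR : 0 ≤ R) (hδ : 0 < δ) :
    ∫ t in Icc (-R) R, (|t| + δ)⁻¹ = 2 * log ((R + δ) / δ) := by
  have hcont : Continuous fun t : ℝ => (|t| + δ)⁻¹ :=
    (continuous_abs.add continuous_const).inv₀ fun t =>
      (add_pos_of_nonneg_of_pos (abs_nonneg t) hδ).ne'
  have hright : ∫ t in (0 : ℝ)..R, (|t| + δ)⁻¹ = log ((R + δ) / δ) := by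
    rw [intervalIntegral.integral_congr (g := fun t => (t + δ)⁻¹) fun t ht => by
      rw [uIcc_of_le hR] at ht; simp only [abs_of_nonneg ht.1],
      intervalIntegral.integral_comp_add_right (fun t => t⁻¹), zero_add,
      integral_inv_of_pos hδ (by linarith)]
  have hleft : ∫ t in (-R)..0, (|t| + δ)⁻¹ = log ((R + δ) / δ) := by
    have := intervalIntegral.integral_comp_neg (a := -R) (b := 0) fun t : ℝ => (|t| + δ)⁻¹
    simp only [abs_neg, neg_zero, neg_neg] at this
    rw [this, hright]
  rw [integral_Icc_eq_integral_Ioc, ← intervalIntegral.integral_of_le (by linarith),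
    ← intervalIntegral.integral_add_adjacent_intervals (hcont.intervalIntegrable _ _)
      (hcont.intervalIntegrable _ _), hleft, hright]
  ring

lemma integral_Icc_kacRiceMajorant_le {R δ : ℝ} (hR : 0 ≤ R) (hδ : 0 < δ) (β : ℝ) :
    ∫ t in Icc (-R) R, kacRiceMajorant β δ t ≤ 3 * √β * √(3 * π) + 108 * log ((R + δ) / δ) := by
  have hgauss : Integrable fun t : ℝ => 3 * √β * exp (-t ^ 2 / 3) := by
    simpa using (integrable_exp_neg_sub_sq_div 0 (by norm_num : (0 : ℝ) < 3)).const_mul (3 * √β)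
  have hinv : Continuous fun t : ℝ => (|t| + δ)⁻¹ :=
    (continuous_abs.add continuous_const).inv₀ fun t =>
      (add_pos_of_nonneg_of_pos (abs_nonneg t) hδ).ne'
  simp_rw [kacRiceMajorant, div_eq_mul_inv (54 : ℝ)]
  rw [integral_add hgauss.integrableOn (hinv.integrableOn_Icc.const_mul _), integral_const_mul 54,
    integral_Icc_inv_abs_add hR hδ]
  calc (∫ t in Icc (-R) R, 3 * √β * exp (-t ^ 2 / 3)) + 54 * (2 * log ((R + δ) / δ))
      ≤ (∫ t, 3 * √β * exp (-t ^ 2 / 3)) + 54 * (2 * log ((R + δ) / δ)) := by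
        grw [setIntegral_le_integral hgauss (ae_of_all _ fun t => by positivity)]
    _ = 3 * √β * √(3 * π) + 108 * log ((R + δ) / δ) := by
        have h := integral_exp_neg_sub_sq_div 0 3
        simp only [sub_zero] at h
        rw [integral_const_mul, h, mul_comm π]
        ring

lemma one_le_mul_rpow_mul_exp {n β t : ℝ} (hn : 0 < n) (hβ : 0 < β)
    (ht : t ^ 2 ≤ 2 * log n - 3 * log β) : 1 ≤ n * β ^ (-(3 : ℝ) / 2) * exp (-t ^ 2 / 2) := by
  rw [rpow_def_of_pos hβ, ← exp_log hn, ← exp_add, ← exp_add]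
  exact one_le_exp (by linarith)

def Tprime (n : ℕ) (β : ℝ) : Set ℝ :=
  Icc (-√(2 * log n - 3 * log β)) √(2 * log n - 3 * log β)

lemma sq_le_and_one_le_of_mem_Tprime {n : ℕ} {β t : ℝ} (hβ : 1 ≤ β)
    (hβn : β ≤ (n : ℝ) ^ ((2 : ℝ) / 3)) (hlog : 2 * log n ≤ β) (ht : t ∈ Tprime n β) :
    t ^ 2 ≤ β ∧ 1 ≤ n * β ^ (-(3 : ℝ) / 2) * exp (-t ^ 2 / 2) := by
  have hn : 0 < (n : ℝ) := by
    rcases (Nat.cast_nonneg n : (0 : ℝ) ≤ n).lt_or_eq with hn | hn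
    · exact hn
    · rw [← hn, zero_rpow (by norm_num)] at hβn; linarith
  have hlogβ : 0 ≤ log β := log_nonneg hβ
  have hT : 0 ≤ 2 * log n - 3 * log β := by
    have := log_le_log (by linarith) hβn
    rw [log_rpow hn] at this
    linarith
  have ht2 : t ^ 2 ≤ 2 * log n - 3 * log β := (Real.sq_le hT).mpr ht
  exact ⟨by linarith, one_le_mul_rpow_mul_exp hn (by linarith) ht2⟩

lemma log_add_div_le_two_mul_log {x R δ : ℝ} (hx : 2 ≤ x) (hR : 0 ≤ R) (hδ : 0 < δ)
    (hRδ : R ≤ x * δ) : log ((R + δ) / δ) ≤ 2 * log x := by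
  have h : R / δ ≤ x := (div_le_iff₀ hδ).mpr hRδ
  calc log ((R + δ) / δ) ≤ log (x ^ 2) :=
        log_le_log (by positivity) (by rw [add_div, div_self hδ.ne']; nlinarith)
    _ = 2 * log x := by rw [log_pow]; norm_num

lemma integral_Tprime_le {n : ℕ} {β : ℝ} (hn : 2 ≤ n) (hβ : 1 ≤ β)
    (hβn : β ≤ (n : ℝ) ^ ((2 : ℝ) / 3)) (hlog : 2 * log n ≤ β)
    {S : ℝ → Matrix (Fin 2) (Fin 2) ℝ}
    (hS : ∀ t ∈ Tprime n β, (S t).IsHermitian ∧ S t * S t * sigmaTilde β t = 1) :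
    ∫ t in Tprime n β, ∫ y in Ioi 0, y * (sigmaTilde β t).det ^ (-(1 : ℝ) / 2) *
        phi2 (S t *ᵥ (![0, y] - muTilde n β t))
      ≤ 3 * √β * √(3 * π) + 216 * log n := by
  have hn2 : (2 : ℝ) ≤ n := by exact_mod_cast hn
  set L₀ := n * β ^ (-(3 : ℝ) / 2)
  set R := √(2 * log n - 3 * log β)
  have hR : 0 ≤ R := sqrt_nonneg _
  have hL₀ : 1 ≤ L₀ := by
    simpa using (sq_le_and_one_le_of_mem_Tprime hβ hβn hlog (t := 0) ⟨neg_nonpos.mpr hR, hR⟩).2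
  have hL₀n : L₀ ≤ n :=
    mul_le_of_le_one_right (by positivity) (rpow_le_one_of_one_le_of_nonpos hβ (by norm_num))
  have hRn : R ≤ √n := by
    refine sqrt_le_sqrt ?_
    have : (n : ℝ) ^ ((2 : ℝ) / 3) ≤ n := rpow_le_self_of_one_le (by linarith) (by norm_num)
    linarith [log_nonneg hβ]
  have hδ : 0 < (√L₀)⁻¹ := by positivity
  refine (setIntegral_mono_of_nonneg (fun t ht => ?_) (fun t ht => ?_)
    (continuous_kacRiceMajorant β hδ).integrableOn_Icc).trans
    ((integral_Icc_kacRiceMajorant_le hR hδ β).trans ?_)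
  · obtain ⟨ht2, -⟩ := sq_le_and_one_le_of_mem_Tprime hβ hβn hlog ht
    have hdet := (sigmaTilde_posDef (β := β) (t := t) (by linarith) (by linarith)).det_pos
    exact setIntegral_nonneg measurableSet_Ioi fun y (hy : 0 < y) =>
      mul_nonneg (mul_nonneg hy.le (rpow_nonneg hdet.le _)) (phi2_nonneg _)
  · obtain ⟨ht2, hL⟩ := sq_le_and_one_le_of_mem_Tprime hβ hβn hlog ht
    exact (integral_Ioi_sigmaTilde_le n (by linarith) (by linarith) (hS t ht).1 (hS t ht).2).trans
      (exp_mul_le_kacRiceMajorant hL (mul_le_of_le_one_right (by positivity) (exp_le_one_iff.mpr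
        (by nlinarith))) β t)
  · have hRδ : R ≤ n * (√L₀)⁻¹ := by
      rw [← div_eq_mul_inv, le_div_iff₀ (by positivity)]
      calc R * √L₀ ≤ √n * √n := by gcongr
        _ = n := mul_self_sqrt (Nat.cast_nonneg n)
    linarith [log_add_div_le_two_mul_log hn2 hR hδ hRδ]

lemma eventually_mul_log_le_rpow {C r : ℝ} (hC : 0 < C) (hr : 0 < r) :
    ∀ᶠ x : ℝ in atTop, C * log x ≤ x ^ r := by
  filter_upwards [(isLittleO_log_rpow_atTop hr).def (inv_pos.mpr hC), eventually_ge_atTop 1]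
    with x hx hx1
  rw [norm_of_nonneg (log_nonneg hx1), norm_of_nonneg (rpow_nonneg (by linarith) _)] at hx
  rwa [← le_div_iff₀' hC, div_eq_inv_mul]

/-- Here `S t` is `Σ̃_t^(−1/2)`, characterized by `S t` positive definite and
`S t · S t · Σ̃_t = 1`. -/
theorem kacRice_gaussian_integral_Tprime_general (c : ℝ) (hc0 : 0 < c) :
    ∃ C > (0 : ℝ), ∃ N : ℕ, ∀ n : ℕ, N ≤ n → ∀ β : ℝ,
      (n : ℝ) ^ c ≤ β → β ≤ (n : ℝ) ^ (2 - c) → β ≤ (n : ℝ) ^ ((2 : ℝ) / 3) →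
      (∀ t ∈ Set.Icc (-(Real.sqrt (2 * Real.log n - 3 * Real.log β)))
          (Real.sqrt (2 * Real.log n - 3 * Real.log β)),
        (sigmaTilde β t).PosDef) ∧
      ∀ S : ℝ → Matrix (Fin 2) (Fin 2) ℝ,
        (∀ t ∈ Set.Icc (-(Real.sqrt (2 * Real.log n - 3 * Real.log β)))
            (Real.sqrt (2 * Real.log n - 3 * Real.log β)),
          (S t).PosDef ∧ S t * S t * sigmaTilde β t = 1) →
        (∫ t in Set.Icc (-(Real.sqrt (2 * Real.log n - 3 * Real.log β)))
            (Real.sqrt (2 * Real.log n - 3 * Real.log β)),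
          ∫ y in Set.Ioi (0 : ℝ),
            y * (sigmaTilde β t).det ^ (-(1 : ℝ) / 2) *
              phi2 ((S t).mulVec (![0, y] - muTilde n β t))) ≤
          C * Real.sqrt β := by
  obtain ⟨N, hN⟩ := eventually_atTop.mp <| tendsto_natCast_atTop_atTop.eventually <|
    eventually_mul_log_le_rpow (by norm_num : (0 : ℝ) < 216) (half_pos hc0)
  refine ⟨13, by norm_num, max N 2, fun n hn β hβc _ hβn => ?_⟩
  have hn2 : 2 ≤ n := (le_max_right N 2).trans hn
  have hn1 : (1 : ℝ) ≤ n := by exact_mod_cast one_le_two.trans hn2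
  have hβ : 1 ≤ β := (one_le_rpow hn1 hc0.le).trans hβc
  have hlog : 216 * log n ≤ √β := by
    refine (hN n ((le_max_left N 2).trans hn)).trans ?_
    rw [sqrt_eq_rpow, div_eq_mul_one_div c, rpow_mul (by linarith)]
    exact rpow_le_rpow (by positivity) hβc (by norm_num)
  have hlog2 : 2 * log n ≤ β := by
    linarith [log_nonneg hn1, sqrt_le_self_iff.mpr (Or.inr hβ)]
  refine ⟨fun t ht => sigmaTilde_posDef (by linarith)
    (by linarith [(sq_le_and_one_le_of_mem_Tprime hβ hβn hlog2 ht).1]), fun S hS => ?_⟩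
  refine (integral_Tprime_le hn2 hβ hβn hlog2
    fun t ht => ⟨(hS t ht).1.1, (hS t ht).2⟩).trans ?_
  have hπ : √(3 * π) ≤ 4 := sqrt_le_iff.mpr ⟨by norm_num, by nlinarith [pi_le_four]⟩
  nlinarith [sqrt_nonneg β]

/-- Under `n^c ≤ β ≤ n^(2−c)` and `β ≤ n^(2/3)`, the matrices
`Σ̃_t` are positive definite on `T'` and the Gaussian Kac–Rice integral over
`T' = [−√(2 log n − 3 log β), √(2 log n − 3 log β)]` is `O(√β)`. Here `S t` is
`Σ̃_t^(−1/2)`, characterized by `S t` positive definite and `S t · S t · Σ̃_t = 1`. -/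
theorem kacRice_gaussian_integral_Tprime (c : ℝ) (hc0 : 0 < c) (hc1 : c < 1) :
    ∃ C > (0 : ℝ), ∃ N : ℕ, ∀ n : ℕ, N ≤ n → ∀ β : ℝ,
      (n : ℝ) ^ c ≤ β → β ≤ (n : ℝ) ^ (2 - c) → β ≤ (n : ℝ) ^ ((2 : ℝ) / 3) →
      (∀ t ∈ Set.Icc (-(Real.sqrt (2 * Real.log n - 3 * Real.log β)))
          (Real.sqrt (2 * Real.log n - 3 * Real.log β)),
        (sigmaTilde β t).PosDef) ∧
      ∀ S : ℝ → Matrix (Fin 2) (Fin 2) ℝ,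
        (∀ t ∈ Set.Icc (-(Real.sqrt (2 * Real.log n - 3 * Real.log β)))
            (Real.sqrt (2 * Real.log n - 3 * Real.log β)),
          (S t).PosDef ∧ S t * S t * sigmaTilde β t = 1) →
        (∫ t in Set.Icc (-(Real.sqrt (2 * Real.log n - 3 * Real.log β)))
            (Real.sqrt (2 * Real.log n - 3 * Real.log β)),
          ∫ y in Set.Ioi (0 : ℝ),
            y * (sigmaTilde β t).det ^ (-(1 : ℝ) / 2) *
              phi2 ((S t).mulVec (![0, y] - muTilde n β t))) ≤
          C * Real.sqrt β :=
  kacRice_gaussian_integral_Tprime_general c hc0
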